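/- With g : Γ → α+1 defined as in the rank-function construction (g(⟨⟩) = α; successor values decrease by one; at limit values g(η) = δ one sets g(η⌢⟨ℓ⟩) = ρ_δ(ℓ); after reaching 0 one resets to α), along every infinite branch η ∈ lim(Γ) the value α is attained infinitely often: for every n there exists m ≥ n with g(η↾m) = α. Equivalently, the fronts A_n (nodes where g equals α for the n-th time) satisfy: every branch of Γ meets A_n for every n, and a node of A_{n+1} properly extends a node of A_n. -/

import Mathlib

/-!
Along a branch, `g` never exceeds `α`, and at each step it either resets to `α` or strictly
decreases (at a limit `δ ≤ α` the new value `ρ_δ(ℓ)` lies below `δ`). By well-foundedness of the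
ordinals it cannot decrease forever, so it returns to `α` infinitely often. The front `A_n` is
then met by a branch at the `n`-th return, and a node of `A_{n+1}` properly extends its prefix at
its own `n`-th return.
-/

/-- Restriction of a branch `x : ℕ → ℕ` to length `m`, as a finite sequence. -/
def res (x : ℕ → ℕ) (m : ℕ) : List ℕ := List.ofFn fun i : Fin m => x i

/-- The `n`-th front `A_n` determined by the rank function `g` on the tree `Γ`. -/
def Aset (Γ : Set (List ℕ)) (g : List ℕ → Ordinal) (α : Ordinal) (n : ℕ) :
    Set (List ℕ) :=
  {η | η ∈ Γ ∧ g η = α ∧ {ℓ : ℕ | ℓ < η.length ∧ g (η.take ℓ) = α}.ncard = n}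

@[simp]
theorem length_res (x : ℕ → ℕ) (m : ℕ) : (res x m).length = m := by
  simp [res]

theorem res_succ (x : ℕ → ℕ) (m : ℕ) : res x (m + 1) = res x m ++ [x m] := by
  rw [res, List.ofFn_succ', List.concat_eq_append]
  rfl

theorem take_res (x : ℕ → ℕ) {k m : ℕ} (h : k ≤ m) : (res x m).take k = res x k := by
  apply List.ext_getElem <;> simp [res, h]

theorem Nat.count_congr_of_lt {p q : ℕ → Prop} [DecidablePred p] [DecidablePred q] {n : ℕ}
    (h : ∀ k < n, p k ↔ q k) : Nat.count p n = Nat.count q n :=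
  le_antisymm (Nat.count_mono_left fun k hk => (h k hk).1)
    (Nat.count_mono_left fun k hk => (h k hk).2)

theorem ncard_setOf_lt_and_eq_count (p : ℕ → Prop) [DecidablePred p] (m : ℕ) :
    {ℓ | ℓ < m ∧ p ℓ}.ncard = Nat.count p m := by
  rw [Nat.count_eq_card_filter_range, ← Set.ncard_coe_finset]
  congr 1
  ext ℓ
  simp

theorem infinite_setOf_eq_of_eq_or_lt {β : Type*} [Preorder β] [WellFoundedLT β]
    {a : ℕ → β} {c : β} (h0 : a 0 ≤ c)
    (hstep : ∀ m, a m ≤ c → a (m + 1) = c ∨ a (m + 1) < a m) :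
    {m | a m = c}.Infinite := by
  have hle : ∀ m, a m ≤ c := by
    intro m
    induction m with
    | zero => exact h0
    | succ m ih => exact (hstep m ih).elim le_of_eq fun hlt => hlt.le.trans ih
  have hreach : ∀ b m, a m = b → ∃ m' ≥ m, a m' = c := by
    intro b
    induction b using WellFoundedLT.induction with
    | _ b ih =>
      rintro m rfl
      rcases hstep m (hle m) with hc | hlt
      · exact ⟨m + 1, m.le_succ, hc⟩
      · obtain ⟨m', hm', hc⟩ := ih _ hlt (m + 1) rfl
        exact ⟨m', (m.le_succ).trans hm', hc⟩
  refine Set.infinite_of_forall_exists_gt fun m => ?_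
  obtain ⟨m', hm', hc⟩ := hreach _ (m + 1) rfl
  exact ⟨m', hc, hm'⟩

section RankFunction

variable {α : Ordinal} {ρ : Ordinal → ℕ → Ordinal} {Γ : Set (List ℕ)} {g : List ℕ → Ordinal}

theorem rank_append_singleton_eq_or_lt
    (hρ : ∀ δ ≤ α, Order.IsSuccLimit δ → ∀ n, ρ δ n < δ)
    (hgsucc : ∀ η ∈ Γ, ∀ ℓ : ℕ, η ++ [ℓ] ∈ Γ → ∀ β, g η = β + 1 → g (η ++ [ℓ]) = β)
    (hglim : ∀ η ∈ Γ, ∀ ℓ : ℕ, η ++ [ℓ] ∈ Γ →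
      Order.IsSuccLimit (g η) → g (η ++ [ℓ]) = ρ (g η) ℓ)
    (hgzero : ∀ η ∈ Γ, ∀ ℓ : ℕ, η ++ [ℓ] ∈ Γ → g η = 0 → g (η ++ [ℓ]) = α)
    {η : List ℕ} (hη : η ∈ Γ) {ℓ : ℕ} (hηℓ : η ++ [ℓ] ∈ Γ) (hle : g η ≤ α) :
    g (η ++ [ℓ]) = α ∨ g (η ++ [ℓ]) < g η := by
  rcases Ordinal.zero_or_succ_or_isSuccLimit (g η) with h0 | ⟨β, hβ⟩ | hlim
  · exact Or.inl (hgzero η hη ℓ hηℓ h0)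
  · right
    rw [hgsucc η hη ℓ hηℓ β (by rw [← hβ, Order.succ_eq_add_one]), ← hβ]
    exact Order.lt_succ β
  · right
    rw [hglim η hη ℓ hηℓ hlim]
    exact hρ _ hle hlim ℓ

theorem infinite_setOf_rank_res_eq
    (hρ : ∀ δ ≤ α, Order.IsSuccLimit δ → ∀ n, ρ δ n < δ)
    (hg0 : g [] = α)
    (hgsucc : ∀ η ∈ Γ, ∀ ℓ : ℕ, η ++ [ℓ] ∈ Γ → ∀ β, g η = β + 1 → g (η ++ [ℓ]) = β)
    (hglim : ∀ η ∈ Γ, ∀ ℓ : ℕ, η ++ [ℓ] ∈ Γ →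
      Order.IsSuccLimit (g η) → g (η ++ [ℓ]) = ρ (g η) ℓ)
    (hgzero : ∀ η ∈ Γ, ∀ ℓ : ℕ, η ++ [ℓ] ∈ Γ → g η = 0 → g (η ++ [ℓ]) = α)
    {x : ℕ → ℕ} (hx : ∀ m, res x m ∈ Γ) :
    {m | g (res x m) = α}.Infinite :=
  infinite_setOf_eq_of_eq_or_lt hg0.le fun m hle => by
    rw [res_succ]
    exact rank_append_singleton_eq_or_lt hρ hgsucc hglim hgzero (hx m)
      (res_succ x m ▸ hx (m + 1)) hle

theorem mem_Aset_iff {n : ℕ} {η : List ℕ} :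
    η ∈ Aset Γ g α n ↔
      η ∈ Γ ∧ g η = α ∧ Nat.count (fun ℓ => g (η.take ℓ) = α) η.length = n := by
  rw [Aset, Set.mem_ofPred_eq, ncard_setOf_lt_and_eq_count]

theorem res_nth_mem_Aset {x : ℕ → ℕ} (hx : ∀ m, res x m ∈ Γ)
    (hinf : {m | g (res x m) = α}.Infinite) (n : ℕ) :
    res x (Nat.nth (fun m => g (res x m) = α) n) ∈ Aset Γ g α n := by
  set m := Nat.nth (fun m => g (res x m) = α) n
  refine mem_Aset_iff.2 ⟨hx m, Nat.nth_mem_of_infinite hinf n, ?_⟩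
  rw [length_res, Nat.count_congr_of_lt fun k hk => by rw [take_res x hk.le]]
  exact Nat.count_nth_of_infinite hinf n

theorem exists_mem_Aset_prefix_ne
    (hclosed : ∀ σ τ : List ℕ, σ <+: τ → τ ∈ Γ → σ ∈ Γ)
    {n : ℕ} {η : List ℕ} (hη : η ∈ Aset Γ g α (n + 1)) :
    ∃ ν ∈ Aset Γ g α n, ν <+: η ∧ ν ≠ η := by
  obtain ⟨hηΓ, -, hcount⟩ := mem_Aset_iff.1 hη
  set p : ℕ → Prop := fun ℓ => g (η.take ℓ) = α
  have hn : ∀ hf : (Set.ofPred p).Finite, n < hf.toFinset.card := fun hf =>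
    (hcount ▸ Nat.count_le_card hf η.length : n + 1 ≤ _)
  set m := Nat.nth p n
  have hm : m < η.length := Nat.nth_lt_of_lt_count (hcount ▸ n.lt_succ_self)
  have hlen : (η.take m).length = m := List.length_take_of_le hm.le
  refine ⟨η.take m, mem_Aset_iff.2 ⟨hclosed _ η (η.take_prefix m) hηΓ, Nat.nth_mem n hn, ?_⟩,
    η.take_prefix m, fun h => hm.ne (hlen ▸ congrArg List.length h)⟩
  rw [hlen, Nat.count_congr_of_lt fun k hk => by rw [List.take_take, min_eq_left hk.le]]
  exact Nat.count_nth hn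

end RankFunction

theorem stmt10_general (α : Ordinal)
    (ρ : Ordinal → ℕ → Ordinal)
    (hρ : ∀ δ ≤ α, Order.IsSuccLimit δ →
      StrictMono (ρ δ) ∧ (∀ n, ρ δ n < δ) ∧ ∀ β < δ, ∃ n, β < ρ δ n)
    (Γ : Set (List ℕ))
    (hclosed : ∀ σ τ : List ℕ, σ <+: τ → τ ∈ Γ → σ ∈ Γ)
    (g : List ℕ → Ordinal)
    (hg0 : g [] = α)
    (hgsucc : ∀ η ∈ Γ, ∀ ℓ : ℕ, η ++ [ℓ] ∈ Γ →
      ∀ β, g η = β + 1 → g (η ++ [ℓ]) = β)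
    (hglim : ∀ η ∈ Γ, ∀ ℓ : ℕ, η ++ [ℓ] ∈ Γ →
      Order.IsSuccLimit (g η) → g (η ++ [ℓ]) = ρ (g η) ℓ)
    (hgzero : ∀ η ∈ Γ, ∀ ℓ : ℕ, η ++ [ℓ] ∈ Γ → g η = 0 → g (η ++ [ℓ]) = α) :
    (∀ x : ℕ → ℕ, (∀ m : ℕ, res x m ∈ Γ) →
      ∀ n : ℕ, ∃ m : ℕ, n ≤ m ∧ g (res x m) = α) ∧
    (∀ x : ℕ → ℕ, (∀ m : ℕ, res x m ∈ Γ) →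
      ∀ n : ℕ, ∃ m : ℕ, res x m ∈ Aset Γ g α n) ∧
    (∀ n : ℕ, ∀ η ∈ Aset Γ g α (n + 1),
      ∃ ν ∈ Aset Γ g α n, ν <+: η ∧ ν ≠ η) := by
  have hinf : ∀ x : ℕ → ℕ, (∀ m, res x m ∈ Γ) → {m | g (res x m) = α}.Infinite :=
    fun x hx => infinite_setOf_rank_res_eq (fun δ hδ hlim => (hρ δ hδ hlim).2.1)
      hg0 hgsucc hglim hgzero hx
  refine ⟨fun x hx n => ?_, fun x hx n => ⟨_, res_nth_mem_Aset hx (hinf x hx) n⟩,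
    fun n η hη => exists_mem_Aset_prefix_ne hclosed hη⟩
  obtain ⟨m, hm, hnm⟩ := (hinf x hx).exists_gt n
  exact ⟨m, hnm.le, hm⟩

theorem stmt10 (α : Ordinal) (hα : Order.IsSuccLimit α)
    (ρ : Ordinal → ℕ → Ordinal)
    (hρ : ∀ δ ≤ α, Order.IsSuccLimit δ →
      StrictMono (ρ δ) ∧ (∀ n, ρ δ n < δ) ∧ ∀ β < δ, ∃ n, β < ρ δ n)
    (Γ : Set (List ℕ)) (hnil : ([] : List ℕ) ∈ Γ)
    (hclosed : ∀ σ τ : List ℕ, σ <+: τ → τ ∈ Γ → σ ∈ Γ)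
    (hsplit : ∀ η ∈ Γ, {m : ℕ | η ++ [m] ∈ Γ}.Infinite)
    (g : List ℕ → Ordinal)
    (hg0 : g [] = α)
    (hgsucc : ∀ η ∈ Γ, ∀ ℓ : ℕ, η ++ [ℓ] ∈ Γ →
      ∀ β, g η = β + 1 → g (η ++ [ℓ]) = β)
    (hglim : ∀ η ∈ Γ, ∀ ℓ : ℕ, η ++ [ℓ] ∈ Γ →
      Order.IsSuccLimit (g η) → g (η ++ [ℓ]) = ρ (g η) ℓ)
    (hgzero : ∀ η ∈ Γ, ∀ ℓ : ℕ, η ++ [ℓ] ∈ Γ → g η = 0 → g (η ++ [ℓ]) = α) :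
    (∀ x : ℕ → ℕ, (∀ m : ℕ, res x m ∈ Γ) →
      ∀ n : ℕ, ∃ m : ℕ, n ≤ m ∧ g (res x m) = α) ∧
    (∀ x : ℕ → ℕ, (∀ m : ℕ, res x m ∈ Γ) →
      ∀ n : ℕ, ∃ m : ℕ, res x m ∈ Aset Γ g α n) ∧
    (∀ n : ℕ, ∀ η ∈ Aset Γ g α (n + 1),
      ∃ ν ∈ Aset Γ g α n, ν <+: η ∧ ν ≠ η) :=
  stmt10_general α ρ hρ Γ hclosed g hg0 hgsucc hglim hgzero
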